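/- Assume the carrier of the interpretation D for the constraints contains at least one element different from 0, and consider the programs P₀ = { p ← ¬q, q ← r(X), r(X) ← X = 0 } and P₁ = { p ← ¬r(X), q ← r(X), r(X) ← X = 0 }. Then p ∉ M(P₀) while p ∈ M(P₁). (P₁ is obtained from P₀ by an application of negative unfolding violating conditions (i)–(iii) of rule R4, showing that without these conditions negative unfolding is incorrect.) -/

import Mathlib

namespace CLP

/-! ### The set `W` of countable ordinals -/

/-- `W` : the set of countable ordinals. -/
abbrev W : Type 1 := {o : Ordinal.{0} // o < (Cardinal.aleph 1).ord}

theorem natW_lt (n : ℕ) : (n : Ordinal.{0}) < (Cardinal.aleph 1).ord := by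
  refine Cardinal.lt_ord.mpr ?_
  simpa using (Cardinal.nat_lt_aleph0 n).trans Cardinal.aleph0_lt_aleph_one

/-- natural numbers as countable ordinals -/
def natW (n : ℕ) : W := ⟨n, natW_lt n⟩

/-- the zero ordinal as an element of `W` -/
def zeroW : W := natW 0

theorem succW_lt {o : Ordinal.{0}} (h : o < (Cardinal.aleph 1).ord) :
    o + 1 < (Cardinal.aleph 1).ord := by
  have hlim : Order.IsSuccLimit ((Cardinal.aleph 1).ord) := Cardinal.isSuccLimit_ord (Cardinal.aleph0_le_aleph 1)
  rw [← Order.succ_eq_add_one]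
  exact hlim.succ_lt h

/-- the successor operation on countable ordinals (`σ(A) + 1`) -/
def succW (o : W) : W := ⟨o.1 + 1, succW_lt o.2⟩

/-! ### Syntax and semantics of constraint logic programs

Atoms, constraints, and clauses are represented semantically: an atom with variables
in `V` is a user-defined predicate symbol (from `Pu`) together with the function
mapping each valuation `v : V → D` to the tuple of values of its argument terms, and a
constraint is represented by its satisfaction predicate on valuations (the
interpretation `𝒟` for the constraints, with carrier `D`, is thereby fixed). -/

/-- An atom: a user-defined predicate symbol together with its (semantically
represented) tuple of argument terms. -/
structure SAtm (V D Pu : Type) where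
  pred : Pu
  args : (V → D) → List D

/-- Ground atoms: the base `B_𝒟` is `{p(d₁,…,dₙ) | p ∈ Pred_u, dᵢ ∈ D}`. -/
abbrev GrAtm (Pu D : Type) := Pu × List D

variable {V D Pu : Type}

/-- the ground atom `v(A)` obtained by applying the valuation `v` to the atom `A` -/
def SAtm.eval (A : SAtm V D Pu) (v : V → D) : GrAtm Pu D := (A.pred, A.args v)

/-- A clause `H ← c ∧ L₁ ∧ … ∧ Lₘ`: a head atom `H`, a constraint `c`, and a body,
i.e. a list of literals; a literal is a pair of a sign (`true` = positive literal `A`,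
`false` = negative literal `¬A`) and an atom. -/
structure SClause (V D Pu : Type) where
  head : SAtm V D Pu
  constr : (V → D) → Prop
  body : List (Bool × SAtm V D Pu)

/-- A constraint logic program: a set of clauses (finiteness is stated separately). -/
abbrev SProg (V D Pu : Type) := Set (SClause V D Pu)

/-- truth of a ground literal in a `D`-interpretation `I` -/
def litTrue (I : Set (GrAtm Pu D)) (l : Bool × GrAtm Pu D) : Prop :=
  if l.1 then l.2 ∈ I else l.2 ∉ I

/-- truth of the ground instance `v(γ)` of the clause `γ` in the `D`-interpretation `I` -/
def SClause.groundTrue (γ : SClause V D Pu) (I : Set (GrAtm Pu D)) (v : V → D) : Prop :=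
  γ.constr v → (∀ l ∈ γ.body, litTrue I (l.1, l.2.eval v)) → γ.head.eval v ∈ I

/-- `I` is a `D`-model of the program `P` -/
def isModel (I : Set (GrAtm Pu D)) (P : SProg V D Pu) : Prop :=
  ∀ γ ∈ P, ∀ v, γ.groundTrue I v

/-- the ground instance `v(γ)` of the clause `γ` is locally stratified w.r.t. `σ` -/
def SClause.locStrat (σ : GrAtm Pu D → W) (γ : SClause V D Pu) (v : V → D) : Prop :=
  γ.constr v → ∀ l ∈ γ.body,
    (l.1 = true → σ (l.2.eval v) ≤ σ (γ.head.eval v)) ∧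
    (l.1 = false → σ (l.2.eval v) < σ (γ.head.eval v))

/-- `P` is locally stratified w.r.t. the local stratification `σ : B_𝒟 → W` -/
def locStratWrt (σ : GrAtm Pu D → W) (P : SProg V D Pu) : Prop :=
  ∀ γ ∈ P, ∀ v, γ.locStrat σ v

/-- `P` is locally stratified -/
def LocallyStratified (P : SProg V D Pu) : Prop := ∃ σ, locStratWrt σ P

/-- `I ≺ J` : `I` is preferable to `J` w.r.t. the local stratification `σ` -/
def pref (σ : GrAtm Pu D → W) (I J : Set (GrAtm Pu D)) : Prop :=
  ∀ A₁ ∈ I \ J, ∃ A₂ ∈ J \ I, σ A₂ < σ A₁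

/-- `M` is a perfect model of `P` w.r.t. the local stratification `σ`:
a `D`-model preferable to every other `D`-model of `P` -/
def PerfectModelWrt (σ : GrAtm Pu D → W) (P : SProg V D Pu) (M : Set (GrAtm Pu D)) : Prop :=
  isModel M P ∧ ∀ N, isModel N P → N ≠ M → pref σ M N

/-- `M` is a perfect model of `P` (w.r.t. some local stratification for `P`) -/
def IsPerfectModel (P : SProg V D Pu) (M : Set (GrAtm Pu D)) : Prop :=
  ∃ σ, locStratWrt σ P ∧ PerfectModelWrt σ P M

/-! ### Predicate dependencies -/

/-- the predicate `p` immediately depends on the predicate `q` in `P` -/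
def immDep (P : SProg V D Pu) (p q : Pu) : Prop :=
  ∃ γ ∈ P, γ.head.pred = p ∧ ∃ l ∈ γ.body, (l.2).pred = q

/-- the predicate `p` depends on the predicate `q` in `P` -/
def dependsOn (P : SProg V D Pu) : Pu → Pu → Prop := Relation.TransGen (immDep P)

/-- `Def(p, P)` : the definition of the predicate `p` in `P` -/
def DefOf (p : Pu) (P : SProg V D Pu) : SProg V D Pu := {γ ∈ P | γ.head.pred = p}

/-! ### Proof trees -/

/-- Finite trees whose internal nodes are ground atoms; the children of a node are
either subtrees (corresponding to positive literals) or leaves labelled by a ground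
atom `B` (corresponding to negative literals `¬B`). A node with the empty list of
children is a node whose unique child is the empty conjunction `true`. -/
inductive PT (Pu D : Type) : Type where
  | node (A : GrAtm Pu D) (children : List (PT Pu D ⊕ GrAtm Pu D)) : PT Pu D

/-- the ground atom at the root of a tree -/
def PT.root : PT Pu D → GrAtm Pu D
  | .node A _ => A

/-- the ground literal corresponding to a child of a node of a tree -/
def childLit : PT Pu D ⊕ GrAtm Pu D → Bool × GrAtm Pu D
  | .inl t => (true, t.root)
  | .inr B => (false, B)

/-- Validity of a tree w.r.t. a program `P` and an "oracle" `O` for the negative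
leaves: each node `A` with children `L₁,…,Lᵣ` must be obtained from a ground instance
`A ← c ∧ L₁ ∧ … ∧ Lᵣ` (with `𝒟 ⊨ c`) of a clause of `P`, and every negative leaf
`¬B` must satisfy `O B`. -/
inductive PT.ValidW (P : SProg V D Pu) (O : GrAtm Pu D → Prop) : PT Pu D → Prop where
  | node {A : GrAtm Pu D} {cs : List (PT Pu D ⊕ GrAtm Pu D)}
      (hc : ∃ γ ∈ P, ∃ v, γ.constr v ∧ γ.head.eval v = A ∧
        γ.body.map (fun l => (l.1, l.2.eval v)) = cs.map childLit)
      (hpos : ∀ t, Sum.inl t ∈ cs → PT.ValidW P O t)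
      (hneg : ∀ B, Sum.inr B ∈ cs → O B) :
      PT.ValidW P O (.node A cs)

/-- `HasPTAux σ P α A` holds iff there is a proof tree for `A` and `P`, where a
negative leaf `¬B` is allowed only if there is no proof tree for `B` and `P` among
the proof trees for ground atoms of stratum `< α`. -/
def HasPTAux (σ : GrAtm Pu D → W) (P : SProg V D Pu) (α : W) (A : GrAtm Pu D) : Prop :=
  ∃ T : PT Pu D, T.root = A ∧
    PT.ValidW P (fun B => ∀ _hlt : σ B < α, ¬ HasPTAux σ P (σ B) B) T
termination_by α.1
decreasing_by exact _hlt

/-- there exists a proof tree for the ground atom `A` and the program `P` -/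
def HasProofTree (σ : GrAtm Pu D → W) (P : SProg V D Pu) (A : GrAtm Pu D) : Prop :=
  HasPTAux σ P (σ A) A

/-- `T` is a proof tree for the ground atom `A` and the program `P` -/
def IsProofTree (σ : GrAtm Pu D → W) (P : SProg V D Pu) (A : GrAtm Pu D) (T : PT Pu D) : Prop :=
  T.root = A ∧
    PT.ValidW P (fun B => ∀ _hlt : σ B < σ A, ¬ HasPTAux σ P (σ B) B) T

/-! ### The measure `μ` -/

mutual
  /-- `size(T)` : the number of atoms occurring at non-leaf nodes of `T` -/
  inductive PT.HasSize : PT Pu D → ℕ → Prop where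
    | node {A cs n} : ChildrenSize cs n → PT.HasSize (.node A cs) (1 + n)
  /-- total size of the subtrees among a list of children -/
  inductive ChildrenSize : List (PT Pu D ⊕ GrAtm Pu D) → ℕ → Prop where
    | nil : ChildrenSize [] 0
    | inl {t cs n m} : PT.HasSize t n → ChildrenSize cs m →
        ChildrenSize (Sum.inl t :: cs) (n + m)
    | inr {B cs m} : ChildrenSize cs m → ChildrenSize (Sum.inr B :: cs) m
end

/-- the (non-strict) lexicographic ordering `≤_lex` on `W × ℕ` -/
def wnLE (a b : W × ℕ) : Prop := a.1 < b.1 ∨ (a.1 = b.1 ∧ a.2 ≤ b.2)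

/-- the strict lexicographic ordering `<_lex` on `W × ℕ` -/
def wnLT (a b : W × ℕ) : Prop := a.1 < b.1 ∨ (a.1 = b.1 ∧ a.2 < b.2)

/-- `⟨α₁,m₁⟩ ⊕ ⟨α₂,m₂⟩ = ⟨max(α₁,α₂), m₁+m₂⟩` -/
noncomputable def oplus (a b : W × ℕ) : W × ℕ := (max a.1 b.1, a.2 + b.2)

/-- `μ(A,P) = min_lex {⟨σ(A), size(T)⟩ | T is a proof tree for A and P}`:
`muAtomIs σ P A m` states that `μ(A,P)` is defined and equal to `m`. -/
def muAtomIs (σ : GrAtm Pu D → W) (P : SProg V D Pu) (A : GrAtm Pu D) (m : W × ℕ) : Prop :=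
  (∃ (T : PT Pu D) (sz : ℕ), IsProofTree σ P A T ∧ T.HasSize sz ∧ m = (σ A, sz)) ∧
  (∀ (T : PT Pu D) (sz : ℕ), IsProofTree σ P A T → T.HasSize sz → wnLE m (σ A, sz))

/-- `μ` on ground literals: `μ(A,P)` for an atom, `⟨σ(A),0⟩` for a negated atom `¬A` -/
def muLitIs (σ : GrAtm Pu D → W) (P : SProg V D Pu) :
    Bool × GrAtm Pu D → W × ℕ → Prop
  | (true, A), m => muAtomIs σ P A m
  | (false, A), m => m = (σ A, 0)

/-- `μ(L₁ ∧ … ∧ Lₙ, P) = μ(L₁,P) ⊕ … ⊕ μ(Lₙ,P)` -/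
inductive muGoalIs (σ : GrAtm Pu D → W) (P : SProg V D Pu) :
    List (Bool × GrAtm Pu D) → W × ℕ → Prop where
  | nil : muGoalIs σ P [] (zeroW, 0)
  | cons {l G m mg} : muLitIs σ P l m → muGoalIs σ P G mg →
      muGoalIs σ P (l :: G) (oplus m mg)

/-!
The models of `P₀` are exactly the supersets of `{q, r(0)}`. That set is therefore perfect,
and since a perfect model is minimal among models, no perfect model of `P₀` contains `p`.

Every local stratification of `P₁` puts each `r(d)` strictly below `p`, because of the clause
`p ← ¬r(X)`; and a model of `P₁` without `p` contains every `r(d)`. With `σ(p) = 1` and all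
other atoms at `0`, `{p, q, r(0)}` is perfect: any other model lacks only `p` from it and
compensates with some `r(d)`, `d ≠ 0`. Conversely, a perfect model `M` without `p` would have
to be preferable to `{p, q, r(0)}`, i.e. it would have to beat its extra atom `r(d)` with `p`,
contradicting `σ(r(d)) < σ(p)`.
-/

section General

variable {V D Pu : Type} {σ : GrAtm Pu D → W} {P : SProg V D Pu} {I J M N : Set (GrAtm Pu D)}

theorem pref_of_subset (h : I ⊆ J) : pref σ I J :=
  fun _ hA => absurd (h hA.1) hA.2

theorem PerfectModelWrt.of_subset_models (hM : isModel M P)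
    (hmin : ∀ N, isModel N P → M ⊆ N) : PerfectModelWrt σ P M :=
  ⟨hM, fun N hN _ => pref_of_subset (hmin N hN)⟩

theorem PerfectModelWrt.eq_of_subset (hM : PerfectModelWrt σ P M) (hN : isModel N P)
    (hNM : N ⊆ M) : N = M := by
  by_contra hne
  obtain ⟨A, hAM, hAN⟩ := Set.exists_of_ssubset (hNM.ssubset_of_ne hne)
  obtain ⟨B, hB, -⟩ := hM.2 N hN hne A ⟨hAM, hAN⟩
  exact hB.2 (hNM hB.1)

theorem locStratWrt.neg_lt (hσ : locStratWrt σ P) {γ : SClause V D Pu} (hγ : γ ∈ P)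
    {v : V → D} (hc : γ.constr v) {A : SAtm V D Pu} (hA : (false, A) ∈ γ.body) :
    σ (A.eval v) < σ (γ.head.eval v) :=
  (hσ γ hγ v hc _ hA).2 rfl

end General

end CLP

namespace Stmt13

open CLP

/-- the user-defined predicate symbols `p`, `q` and `r` -/
inductive Pd where
  | p | q | r
deriving DecidableEq

variable (D : Type) (z : D)

/-- the atom `p` (0-ary) -/
def atomP : SAtm Unit D Pd := ⟨Pd.p, fun _ => []⟩
/-- the atom `q` (0-ary) -/
def atomQ : SAtm Unit D Pd := ⟨Pd.q, fun _ => []⟩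
/-- the atom `r(X)` -/
def atomRX : SAtm Unit D Pd := ⟨Pd.r, fun v => [v ()]⟩

/-- `P₀ = { p ← ¬q,  q ← r(X),  r(X) ← X = 0 }` (`z` plays the role of `0`) -/
def P0 : SProg Unit D Pd :=
  { ⟨atomP D, fun _ => True, [(false, atomQ D)]⟩,
    ⟨atomQ D, fun _ => True, [(true, atomRX D)]⟩,
    ⟨atomRX D, fun v => v () = z, []⟩ }

/-- `P₁ = { p ← ¬r(X),  q ← r(X),  r(X) ← X = 0 }` -/
def P1 : SProg Unit D Pd :=
  { ⟨atomP D, fun _ => True, [(false, atomRX D)]⟩,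
    ⟨atomQ D, fun _ => True, [(true, atomRX D)]⟩,
    ⟨atomRX D, fun v => v () = z, []⟩ }

def stratum : GrAtm Pd D → W := fun A => if A.1 = Pd.p then natW 1 else natW 0

def modelP0 : Set (GrAtm Pd D) := {(Pd.q, []), (Pd.r, [z])}

def modelP1 : Set (GrAtm Pd D) := insert (Pd.p, []) (modelP0 D z)

section

variable {D z}

theorem natW_zero_lt_one : natW 0 < natW 1 := by
  show ((0 : ℕ) : Ordinal.{0}) < ((1 : ℕ) : Ordinal.{0})
  exact_mod_cast Nat.zero_lt_one

theorem forall_valuation_iff {p : (Unit → D) → Prop} : (∀ v, p v) ↔ ∀ d, p fun _ => d :=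
  ⟨fun h _ => h _, fun h v => h (v ())⟩

theorem isModel_P0_iff {I : Set (GrAtm Pd D)} : isModel I (P0 D z) ↔ modelP0 D z ⊆ I := by
  have : Nonempty D := ⟨z⟩
  have clausewise : isModel I (P0 D z) ↔ ((Pd.q, []) ∉ I → (Pd.p, []) ∈ I) ∧
      (∀ d, (Pd.r, [d]) ∈ I → (Pd.q, []) ∈ I) ∧ (Pd.r, [z]) ∈ I := by
    simp [isModel, P0, SClause.groundTrue, SAtm.eval, litTrue, atomP, atomQ, atomRX,
      forall_valuation_iff]
  rw [clausewise, modelP0, Set.insert_subset_iff, Set.singleton_subset_iff]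
  exact ⟨fun ⟨_, hq, hr⟩ => ⟨hq z hr, hr⟩,
    fun ⟨hq, hr⟩ => ⟨fun hnq => (hnq hq).elim, fun _ _ => hq, hr⟩⟩

theorem isModel_P1_iff {I : Set (GrAtm Pd D)} :
    isModel I (P1 D z) ↔ (∀ d, (Pd.r, [d]) ∉ I → (Pd.p, []) ∈ I) ∧ modelP0 D z ⊆ I := by
  have clausewise : isModel I (P1 D z) ↔ (∀ d, (Pd.r, [d]) ∉ I → (Pd.p, []) ∈ I) ∧
      (∀ d, (Pd.r, [d]) ∈ I → (Pd.q, []) ∈ I) ∧ (Pd.r, [z]) ∈ I := by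
    simp [isModel, P1, SClause.groundTrue, SAtm.eval, litTrue, atomP, atomQ, atomRX,
      forall_valuation_iff]
  rw [clausewise, modelP0, Set.insert_subset_iff, Set.singleton_subset_iff]
  exact ⟨fun ⟨hp, hq, hr⟩ => ⟨hp, hq z hr, hr⟩, fun ⟨hp, hq, hr⟩ => ⟨hp, fun _ _ => hq, hr⟩⟩

theorem isModel_modelP1 : isModel (modelP1 D z) (P1 D z) :=
  isModel_P1_iff.2 ⟨fun _ _ => Set.mem_insert _ _, Set.subset_insert _ _⟩

theorem r_notMem_modelP1 {d : D} (hd : d ≠ z) : (Pd.r, [d]) ∉ modelP1 D z := by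
  simp [modelP1, modelP0, hd]

theorem eq_p_of_mem_modelP1_sdiff {I : Set (GrAtm Pd D)} (hI : modelP0 D z ⊆ I) {A : GrAtm Pd D}
    (hA : A ∈ modelP1 D z \ I) : A = (Pd.p, []) :=
  (Set.mem_insert_iff.1 hA.1).resolve_right fun h => hA.2 (hI h)

theorem stratum_r_lt_p (d : D) : stratum D (Pd.r, [d]) < stratum D (Pd.p, []) := by
  simp [stratum, natW_zero_lt_one]

theorem locStratWrt_stratum_P0 : locStratWrt (stratum D) (P0 D z) := by
  simp [locStratWrt, P0, SClause.locStrat, SAtm.eval, stratum, atomP, atomQ, atomRX,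
    natW_zero_lt_one]

theorem locStratWrt_stratum_P1 : locStratWrt (stratum D) (P1 D z) := by
  simp [locStratWrt, P1, SClause.locStrat, SAtm.eval, stratum, atomP, atomQ, atomRX,
    natW_zero_lt_one]

theorem perfectModelWrt_modelP0 : PerfectModelWrt (stratum D) (P0 D z) (modelP0 D z) :=
  .of_subset_models (isModel_P0_iff.2 subset_rfl) fun _ => isModel_P0_iff.1

theorem perfectModelWrt_modelP1 (hD : ∃ d : D, d ≠ z) :
    PerfectModelWrt (stratum D) (P1 D z) (modelP1 D z) := by
  obtain ⟨d, hd⟩ := hD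
  refine ⟨isModel_modelP1, fun N hN _ A hA => ?_⟩
  obtain ⟨hNp, hN0⟩ := isModel_P1_iff.1 hN
  obtain rfl := eq_p_of_mem_modelP1_sdiff hN0 hA
  exact ⟨(Pd.r, [d]), ⟨by_contra fun h => hA.2 (hNp d h), r_notMem_modelP1 hd⟩,
    stratum_r_lt_p d⟩

theorem p_notMem_of_perfectModelWrt_P0 {σ : GrAtm Pd D → W} {M : Set (GrAtm Pd D)}
    (hM : PerfectModelWrt σ (P0 D z) M) : (Pd.p, []) ∉ M := by
  intro hp
  have hN : isModel (M \ {(Pd.p, [])}) (P0 D z) := by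
    refine isModel_P0_iff.2 fun A hA => ⟨isModel_P0_iff.1 hM.1 hA, ?_⟩
    rintro rfl
    simp [modelP0] at hA
  rw [← hM.eq_of_subset hN Set.sdiff_subset] at hp
  exact hp.2 rfl

theorem p_mem_of_perfectModelWrt_P1 {σ : GrAtm Pd D → W} {M : Set (GrAtm Pd D)}
    (hσ : locStratWrt σ (P1 D z)) (hM : PerfectModelWrt σ (P1 D z) M) (hD : ∃ d : D, d ≠ z) :
    (Pd.p, []) ∈ M := by
  obtain ⟨d, hd⟩ := hD
  by_contra hp
  obtain ⟨hMp, hM0⟩ := isModel_P1_iff.1 hM.1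
  have hrd : (Pd.r, [d]) ∈ M := by_contra fun h => hp (hMp d h)
  have hne : modelP1 D z ≠ M := fun h => hp (h ▸ Set.mem_insert _ _)
  obtain ⟨A, hA, hlt⟩ := hM.2 _ isModel_modelP1 hne _ ⟨hrd, r_notMem_modelP1 hd⟩
  obtain rfl := eq_p_of_mem_modelP1_sdiff hM0 hA
  have hstrat : σ (Pd.r, [d]) < σ (Pd.p, []) :=
    hσ.neg_lt (γ := ⟨atomP D, fun _ => True, [(false, atomRX D)]⟩) (v := fun _ => d)
      (A := atomRX D) (by simp [P1]) trivial (by simp)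
  exact hlt.not_gt hstrat

end

/-- If the carrier `D` contains at least one element different
from `0`, then `P₀` and `P₁` have perfect models, `p ∉ M(P₀)` and `p ∈ M(P₁)`
(so the negative unfolding step leading from `P₀` to `P₁`, which violates
conditions (i)–(iii) of rule R4, is incorrect). -/
theorem p_not_in_M_P0_but_in_M_P1 (hD : ∃ d : D, d ≠ z) :
    (∃ M, IsPerfectModel (P0 D z) M) ∧ (∃ M, IsPerfectModel (P1 D z) M) ∧
    (∀ M, IsPerfectModel (P0 D z) M → ((Pd.p, []) : GrAtm Pd D) ∉ M) ∧
    (∀ M, IsPerfectModel (P1 D z) M → ((Pd.p, []) : GrAtm Pd D) ∈ M) :=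
  ⟨⟨_, _, locStratWrt_stratum_P0, perfectModelWrt_modelP0⟩,
    ⟨_, _, locStratWrt_stratum_P1, perfectModelWrt_modelP1 hD⟩,
    fun _ ⟨_, _, hM⟩ => p_notMem_of_perfectModelWrt_P0 hM,
    fun _ ⟨_, hσ, hM⟩ => p_mem_of_perfectModelWrt_P1 hσ hM hD⟩

end Stmt13
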